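/- arXiv:1506.07382 — 3 statements merged into one kernel-verified Lean document; each statement's English description precedes it below -/
import Mathlib

section
/- For α ∈ (0,1], real r, and x > 0, if y(x) = x^{rα}, then x^{2α}·T_α(T_α y)(x) + α·x^{α}·(T_α y)(x) − α²·p²·y(x) = α²·(r² − p²)·x^{rα}. In particular, x^{rα} solves the Euler-type equation x^{2α} T_α T_α y + α x^α T_α y − α² p² y = 0 if and only if r² = p². -/
open Real Filter Topology

noncomputable def confDeriv (α : ℝ) (f : ℝ → ℝ) (x : ℝ) : ℝ :=
  x ^ (1 - α) * deriv f x

theorem Filter.EventuallyEq.confDeriv_eq {f g : ℝ → ℝ} {x : ℝ} (α : ℝ) (h : f =ᶠ[𝓝 x] g) :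
    confDeriv α f x = confDeriv α g x := by
  rw [confDeriv, confDeriv, h.deriv_eq]

theorem confDeriv_const_mul (α a : ℝ) (f : ℝ → ℝ) (x : ℝ) :
    confDeriv α (fun t => a * f t) x = a * confDeriv α f x := by
  rw [confDeriv, confDeriv, deriv_const_mul_field', mul_left_comm]

theorem confDeriv_rpow (α c : ℝ) {x : ℝ} (hx : 0 < x) :
    confDeriv α (fun t => t ^ c) x = c * x ^ (c - α) := by
  rw [confDeriv, Real.deriv_rpow_const, mul_left_comm, ← Real.rpow_add hx]
  ring_nf

theorem confDeriv_confDeriv_rpow (α c : ℝ) {x : ℝ} (hx : 0 < x) :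
    confDeriv α (confDeriv α (fun t => t ^ c)) x = c * (c - α) * x ^ (c - 2 * α) := by
  have hlocal : confDeriv α (fun t => t ^ c) =ᶠ[𝓝 x] fun t => c * t ^ (c - α) := by
    filter_upwards [Ioi_mem_nhds hx] with t ht
    exact confDeriv_rpow α c ht
  rw [hlocal.confDeriv_eq, confDeriv_const_mul, confDeriv_rpow α _ hx]
  ring_nf

theorem conformable_euler_equation (α : ℝ) (hα : α ∈ Set.Ioc (0:ℝ) 1)
    (r p : ℝ) (y : ℝ → ℝ) (hy : y = fun t => t ^ (r * α))
    (x : ℝ) (hx : 0 < x) :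
    (x ^ (2 * α) * confDeriv α (confDeriv α y) x
        + α * x ^ α * confDeriv α y x - α ^ 2 * p ^ 2 * y x
      = α ^ 2 * (r ^ 2 - p ^ 2) * x ^ (r * α))
    ∧ ((x ^ (2 * α) * confDeriv α (confDeriv α y) x
        + α * x ^ α * confDeriv α y x - α ^ 2 * p ^ 2 * y x = 0)
      ↔ r ^ 2 = p ^ 2) := by
  have hpow (a : ℝ) : x ^ a * x ^ (r * α - a) = x ^ (r * α) := by
    rw [← Real.rpow_add hx, add_sub_cancel]
  have key : x ^ (2 * α) * confDeriv α (confDeriv α y) x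
        + α * x ^ α * confDeriv α y x - α ^ 2 * p ^ 2 * y x
      = α ^ 2 * (r ^ 2 - p ^ 2) * x ^ (r * α) := by
    subst hy
    rw [confDeriv_confDeriv_rpow α _ hx, confDeriv_rpow α _ hx]
    linear_combination (r * α * (r * α - α)) * hpow (2 * α) + α * (r * α) * hpow α
  refine ⟨key, ?_⟩
  have hα2 : α ^ 2 ≠ 0 := pow_ne_zero 2 hα.1.ne'
  have hxpow : x ^ (r * α) ≠ 0 := (Real.rpow_pos_of_pos hx _).ne'
  rw [key, mul_eq_zero, mul_eq_zero, sub_eq_zero]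
  simp only [hα2, hxpow, false_or, or_false]
end

section
/- For α ∈ (0,1] and x > 0, the function y(x) = Σ_{n=0}^∞ ((−1)^n/(n!)²)·(x^α/2)^{2n} satisfies the conformable fractional Bessel equation of order zero: x^{2α}·T_α(T_α y)(x) + α·x^α·(T_α y)(x) + α²·x^{2α}·y(x) = 0. -/
open Real

open Filter Topology Nat

/-!
For `x > 0` the chain rule gives `T_α (g ∘ (· ^ α)) x = α g'(x ^ α)`, so for `y = J(x ^ α)` the
left-hand side equals `α² (u² J'' + u J' + u² J)` at `u = x ^ α`, and the claim reduces to Bessel's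
equation of order zero for `J = J₀`. Writing `J₀(u) = F(u²)` with
`F(v) = ∑ (-1)ⁿ vⁿ / (4ⁿ (n!)²)`, Bessel's equation becomes `4 v F'' + 4 F' + F = 0`; differentiating
the entire series `F` termwise, this is the recursion `4 (n + 1)² cₙ₊₁ = -cₙ` of its coefficients.
-/

lemma confDeriv_comp_rpow {α z g' : ℝ} {g : ℝ → ℝ} (hz : 0 < z) (hg : HasDerivAt g g' (z ^ α)) :
    confDeriv α (fun t => g (t ^ α)) z = α * g' := by
  have hcomp : HasDerivAt (fun t => g (t ^ α)) (g' * (α * z ^ (α - 1))) z :=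
    hg.comp z (hasDerivAt_rpow_const (Or.inl hz.ne'))
  have hcancel : z ^ (1 - α) * z ^ (α - 1) = 1 := by
    rw [← rpow_add hz, sub_add_sub_cancel', sub_self, rpow_zero]
  rw [confDeriv, hcomp.deriv]
  linear_combination α * g' * hcancel

lemma confDeriv_confDeriv_comp_rpow {α x : ℝ} {g g' g'' : ℝ → ℝ}
    (hg : ∀ u, HasDerivAt g (g' u) u) (hg' : ∀ u, HasDerivAt g' (g'' u) u) (hx : 0 < x) :
    confDeriv α (confDeriv α fun t => g (t ^ α)) x = α ^ 2 * g'' (x ^ α) := by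
  have hnear : confDeriv α (fun t => g (t ^ α)) =ᶠ[𝓝 x] fun t => α * g' (t ^ α) := by
    filter_upwards [Ioi_mem_nhds hx] with t ht using confDeriv_comp_rpow ht (hg _)
  rw [confDeriv, hnear.deriv_eq, ← confDeriv, confDeriv_comp_rpow hx ((hg' _).const_mul α)]
  ring

theorem confDeriv_bessel_of_bessel {α x : ℝ} {J J' J'' : ℝ → ℝ}
    (hJ : ∀ u, HasDerivAt J (J' u) u) (hJ' : ∀ u, HasDerivAt J' (J'' u) u)
    (hbessel : ∀ u, u ^ 2 * J'' u + u * J' u + u ^ 2 * J u = 0) (hx : 0 < x) :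
    x ^ (2 * α) * confDeriv α (confDeriv α fun t => J (t ^ α)) x
      + α * x ^ α * confDeriv α (fun t => J (t ^ α)) x + α ^ 2 * x ^ (2 * α) * J (x ^ α) = 0 := by
  have hsq : x ^ (2 * α) = (x ^ α) ^ 2 := by
    rw [mul_comm, rpow_mul hx.le, rpow_two]
  rw [confDeriv_confDeriv_comp_rpow hJ hJ' hx, confDeriv_comp_rpow hx (hJ _), hsq]
  linear_combination α ^ 2 * hbessel (x ^ α)

section PowerSeries

def derivCoeff (a : ℕ → ℝ) (n : ℕ) : ℝ := (n + 1) * a (n + 1)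

variable {a : ℕ → ℝ}

lemma natCast_mul_pow_sub_one_le {y R : ℝ} (hR : 1 ≤ R) (hy : |y| ≤ R) (n : ℕ) :
    n * |y| ^ (n - 1) ≤ (2 * R) ^ n := by
  have hn : (n : ℝ) ≤ 2 ^ n := by exact_mod_cast n.lt_two_pow_self.le
  have hpow : |y| ^ (n - 1) ≤ R ^ n :=
    (pow_le_pow_left₀ (abs_nonneg y) hy _).trans (pow_le_pow_right₀ hR (n.sub_le 1))
  rw [mul_pow]
  exact mul_le_mul hn hpow (by positivity) (by positivity)

lemma summable_abs_derivCoeff_mul_pow (ha : ∀ r, Summable fun n => |a n * r ^ n|) (r : ℝ) :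
    Summable fun n => |derivCoeff a n * r ^ n| := by
  have hR : 1 ≤ |r| + 1 := by linarith [abs_nonneg r]
  refine ((summable_nat_add_iff 1).mpr (ha (2 * (|r| + 1)))).of_nonneg_of_le
    (fun n => abs_nonneg _) fun n => ?_
  have hbound := natCast_mul_pow_sub_one_le hR (le_add_of_nonneg_right zero_le_one) (n + 1)
  rw [add_tsub_cancel_right, Nat.cast_succ] at hbound
  have hcoeff : |((n : ℝ) + 1)| = n + 1 := abs_of_nonneg (by positivity)
  have hbase : |2 * (|r| + 1)| = 2 * (|r| + 1) := abs_of_nonneg (by positivity)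
  simp only [derivCoeff, abs_mul, abs_pow, hcoeff, hbase]
  nlinarith [abs_nonneg (a (n + 1))]

lemma hasDerivAt_tsum_mul_pow (ha : ∀ r, Summable fun n => |a n * r ^ n|) (v : ℝ) :
    HasDerivAt (fun v => ∑' n, a n * v ^ n) (∑' n, derivCoeff a n * v ^ n) v := by
  set R := |v| + 1
  have hR : 1 ≤ R := by linarith [abs_nonneg v]
  have hbound : ∀ n, ∀ y ∈ Metric.ball (0 : ℝ) R,
      ‖a n * (n * y ^ (n - 1))‖ ≤ |a n * (2 * R) ^ n| := by
    intro n y hy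
    rw [mem_ball_zero_iff, Real.norm_eq_abs] at hy
    have hbase : |2 * R| = 2 * R := abs_of_nonneg (by positivity)
    simp only [Real.norm_eq_abs, abs_mul, abs_pow, Nat.abs_cast, hbase]
    exact mul_le_mul_of_nonneg_left (natCast_mul_pow_sub_one_le hR hy.le n) (abs_nonneg _)
  have hv : v ∈ Metric.ball (0 : ℝ) R := by
    rw [mem_ball_zero_iff, Real.norm_eq_abs]
    exact lt_add_one _
  have hderiv := hasDerivAt_tsum_of_isPreconnected (ha (2 * R)) Metric.isOpen_ball
    (convex_ball 0 R).isPreconnected (fun n y _ => (hasDerivAt_pow n y).const_mul (a n)) hbound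
    hv (ha v).of_abs hv
  rw [(Summable.of_norm_bounded (ha (2 * R)) fun n => hbound n v hv).tsum_eq_zero_add] at hderiv
  simpa [derivCoeff, mul_comm, mul_left_comm] using hderiv

end PowerSeries

noncomputable def besselCoeff (n : ℕ) : ℝ := (-1) ^ n / (4 ^ n * (n ! : ℝ) ^ 2)

lemma summable_abs_besselCoeff_mul_pow (r : ℝ) : Summable fun n => |besselCoeff n * r ^ n| := by
  refine (Real.summable_pow_div_factorial |r|).of_nonneg_of_le (fun n => abs_nonneg _) fun n => ?_
  have hfac : (1 : ℝ) ≤ n ! := by exact_mod_cast n.factorial_pos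
  have hden : (n ! : ℝ) ≤ 4 ^ n * (n ! : ℝ) ^ 2 := by
    nlinarith [one_le_pow₀ (by norm_num : (1 : ℝ) ≤ 4) (n := n)]
  rw [besselCoeff, abs_mul, abs_div, abs_pow, abs_neg, abs_one, one_pow, abs_pow,
    abs_of_pos (by positivity), one_div_mul_eq_div]
  exact div_le_div_of_nonneg_left (by positivity) (by positivity) hden

lemma besselCoeff_succ (n : ℕ) : 4 * ((n : ℝ) + 1) ^ 2 * besselCoeff (n + 1) = -besselCoeff n := by
  simp only [besselCoeff, pow_succ, factorial_succ, cast_mul, cast_succ]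
  field_simp

lemma besselCoeff_ode (v : ℝ) :
    4 * v * ∑' n, derivCoeff (derivCoeff besselCoeff) n * v ^ n
      + 4 * ∑' n, derivCoeff besselCoeff n * v ^ n + ∑' n, besselCoeff n * v ^ n = 0 := by
  have hs1 := (summable_abs_derivCoeff_mul_pow summable_abs_besselCoeff_mul_pow v).of_abs
  have hs2 := (summable_abs_derivCoeff_mul_pow
    (summable_abs_derivCoeff_mul_pow summable_abs_besselCoeff_mul_pow) v).of_abs
  have hsum := (hs1.hasSum.mul_left 4).add (summable_abs_besselCoeff_mul_pow v).of_abs.hasSum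
  rw [← hasSum_nat_add_iff' 1] at hsum
  have hshift : HasSum (fun n => -(4 * v) * (derivCoeff (derivCoeff besselCoeff) n * v ^ n))
      (-(4 * v) * ∑' n, derivCoeff (derivCoeff besselCoeff) n * v ^ n) :=
    hs2.hasSum.mul_left _
  have key := hsum.unique (hshift.congr_fun fun n => ?_)
  · have h0 : 4 * (derivCoeff besselCoeff 0 * v ^ 0) + besselCoeff 0 * v ^ 0 = 0 := by
      have := besselCoeff_succ 0
      simp only [derivCoeff]
      push_cast at this ⊢
      linear_combination this
    rw [Finset.sum_range_one, h0, sub_zero] at key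
    linear_combination key
  · have h1 := besselCoeff_succ (n + 1)
    simp only [derivCoeff, pow_succ]
    push_cast at h1 ⊢
    linear_combination (v ^ n * v) * h1

lemma hasDerivAt_comp_sq {F F' : ℝ → ℝ} {u : ℝ} (hF : HasDerivAt F (F' (u ^ 2)) (u ^ 2)) :
    HasDerivAt (fun u => F (u ^ 2)) (2 * u * F' (u ^ 2)) u := by
  refine (hF.comp (h := fun u => u ^ 2) u (hasDerivAt_pow 2 u)).congr_deriv ?_
  push_cast
  ring

theorem confDeriv_bessel_of_comp_sq {α x : ℝ} {F F' F'' : ℝ → ℝ}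
    (hF : ∀ v, HasDerivAt F (F' v) v) (hF' : ∀ v, HasDerivAt F' (F'' v) v)
    (hode : ∀ v, 4 * v * F'' v + 4 * F' v + F v = 0) (hx : 0 < x) :
    x ^ (2 * α) * confDeriv α (confDeriv α fun t => F ((t ^ α) ^ 2)) x
      + α * x ^ α * confDeriv α (fun t => F ((t ^ α) ^ 2)) x
      + α ^ 2 * x ^ (2 * α) * F ((x ^ α) ^ 2) = 0 := by
  have hJ' (u : ℝ) : HasDerivAt (fun u => 2 * u * F' (u ^ 2))
      (2 * F' (u ^ 2) + 4 * u ^ 2 * F'' (u ^ 2)) u := by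
    refine (((hasDerivAt_id' u).const_mul 2).fun_mul
      (hasDerivAt_comp_sq (hF' _))).congr_deriv ?_
    ring
  refine confDeriv_bessel_of_bessel (fun u => hasDerivAt_comp_sq (hF _)) hJ' (fun u => ?_) hx
  linear_combination u ^ 2 * hode (u ^ 2)

theorem conformable_bessel_order_zero_general (α : ℝ)
    (y : ℝ → ℝ)
    (hy : y = fun t => ∑' n : ℕ,
        ((-1 : ℝ) ^ n / ((n.factorial : ℝ)) ^ 2) * (t ^ α / 2) ^ (2 * n))
    (x : ℝ) (hx : 0 < x) :
    x ^ (2 * α) * confDeriv α (confDeriv α y) x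
      + α * x ^ α * confDeriv α y x + α ^ 2 * x ^ (2 * α) * y x = 0 := by
  have hF := hasDerivAt_tsum_mul_pow summable_abs_besselCoeff_mul_pow
  have hF' := hasDerivAt_tsum_mul_pow
    (summable_abs_derivCoeff_mul_pow summable_abs_besselCoeff_mul_pow)
  have hy' : y = fun t => ∑' n, besselCoeff n * ((t ^ α) ^ 2) ^ n := by
    subst hy
    funext t
    congr! 2 with n
    rw [besselCoeff, pow_mul, div_pow, div_pow]
    ring
  subst hy'
  exact confDeriv_bessel_of_comp_sq hF hF' besselCoeff_ode hx

theorem conformable_bessel_order_zero (α : ℝ) (hα : α ∈ Set.Ioc (0:ℝ) 1)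
    (y : ℝ → ℝ)
    (hy : y = fun t => ∑' n : ℕ,
        ((-1 : ℝ) ^ n / ((n.factorial : ℝ)) ^ 2) * (t ^ α / 2) ^ (2 * n))
    (x : ℝ) (hx : 0 < x) :
    x ^ (2 * α) * confDeriv α (confDeriv α y) x
      + α * x ^ α * confDeriv α y x + α ^ 2 * x ^ (2 * α) * y x = 0 :=
  conformable_bessel_order_zero_general α y hy x hx
end

section
/- Let α ∈ (0,1] and p real with p not a positive integer (so that Γ(−p+n+1) is defined). For x > 0 define (J_α)_{−p}(x) = Σ_{n=0}^∞ ((−1)^n/(n!·Γ(−p+n+1)))·(x^α/2)^{2n−p}. Then (J_α)_{−p} satisfies the conformable fractional Bessel equation x^{2α}·T_α(T_α y) + α·x^α·(T_α y) + α²·(x^{2α} − p²)·y = 0. -/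
open Real

noncomputable def confBesselJneg (α p : ℝ) (x : ℝ) : ℝ :=
  ∑' n : ℕ, ((-1 : ℝ) ^ n / ((n.factorial : ℝ) * Real.Gamma (-p + n + 1)))
    * (x ^ α / 2) ^ (2 * (n : ℝ) - p)

namespace ConfBesselAux

open Filter Metric

def Entire (a : ℕ → ℝ) : Prop := ∀ r : ℝ, 0 < r → Summable fun n => |a n| * r ^ n

noncomputable def seqD (a : ℕ → ℝ) : ℕ → ℝ := fun n => ((n : ℝ) + 1) * a (n + 1)

noncomputable def psum (a : ℕ → ℝ) : ℝ → ℝ := fun u => ∑' n, a n * u ^ n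

noncomputable def bc (p : ℝ) : ℕ → ℝ :=
  fun n => (-1) ^ n / ((n.factorial : ℝ) * Real.Gamma (-p + n + 1) * 4 ^ n)

variable {a : ℕ → ℝ}

lemma Entire.summable (ha : Entire a) (t : ℝ) : Summable fun n => a n * t ^ n := by
  refine Summable.of_norm (Summable.of_nonneg_of_le (fun n => norm_nonneg _)
    (fun n => ?_) (ha (|t| + 1) (by positivity)))
  rw [norm_mul, norm_pow, Real.norm_eq_abs, Real.norm_eq_abs]
  exact mul_le_mul_of_nonneg_left (pow_le_pow_left₀ (abs_nonneg t) (by linarith) n) (abs_nonneg _)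

lemma Entire.mul_nat (ha : Entire a) : Entire fun n => (n : ℝ) * a n := by
  intro r hr
  refine Summable.of_nonneg_of_le (fun n => by positivity) (fun n => ?_) (ha (2 * r) (by positivity))
  have h1 : (n : ℝ) ≤ 2 ^ n := by exact_mod_cast (Nat.lt_two_pow_self (n := n)).le
  rw [abs_mul, Nat.abs_cast, mul_pow]
  calc (n : ℝ) * |a n| * r ^ n ≤ 2 ^ n * |a n| * r ^ n := by gcongr
    _ = |a n| * (2 ^ n * r ^ n) := by ring

lemma Entire.shift (ha : Entire a) : Entire fun n => a (n + 1) := by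
  intro r hr
  have h := ((summable_nat_add_iff 1).2 (ha r hr)).mul_right r⁻¹
  refine h.congr fun n => ?_
  rw [pow_succ]
  field_simp

lemma Entire.const_mul (c : ℝ) (ha : Entire a) : Entire fun n => c * a n := by
  intro r hr
  refine ((ha r hr).mul_left |c|).congr fun n => by rw [abs_mul]; ring

lemma Entire.seqD (ha : Entire a) : Entire (ConfBesselAux.seqD a) := by
  intro r hr
  refine ((ha.mul_nat.shift) r hr).congr fun n => ?_
  simp only [ConfBesselAux.seqD]
  push_cast
  ring

lemma hasDerivAt_psum (ha : Entire a) (u : ℝ) :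
    HasDerivAt (psum a) (psum (seqD a) u) u := by
  set R : ℝ := |u| + 1 with hR
  have hR1 : (1 : ℝ) ≤ R := by simp [hR]
  have hR0 : (0 : ℝ) < R := by linarith
  have hu : u ∈ ball (0 : ℝ) R := by
    simp [mem_ball, Real.dist_eq, hR]
  have hsumU : Summable fun n : ℕ => |(n : ℝ) * a n| * R ^ n := ha.mul_nat R hR0
  have hbound : ∀ (n : ℕ), ∀ (v : ℝ), v ∈ ball (0 : ℝ) R →
      ‖a n * ((n : ℝ) * v ^ (n - 1))‖ ≤ |(n : ℝ) * a n| * R ^ n := by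
    intro n v hv
    have hvR : |v| ≤ R := by
      have := mem_ball.1 hv
      rw [Real.dist_eq, sub_zero] at this
      linarith
    rw [Real.norm_eq_abs, abs_mul, abs_mul, abs_mul, Nat.abs_cast, abs_pow]
    calc |a n| * ((n:ℝ) * |v| ^ (n-1)) ≤ |a n| * ((n:ℝ) * R ^ (n-1)) := by
          gcongr
      _ ≤ |a n| * ((n:ℝ) * R ^ n) := by
          gcongr
          · exact Nat.sub_le n 1
      _ = (n:ℝ) * |a n| * R ^ n := by ring
  have hd := hasDerivAt_tsum_of_isPreconnected
    (g := fun (n : ℕ) (y : ℝ) => a n * y ^ n)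
    (g' := fun (n : ℕ) (v : ℝ) => a n * ((n : ℝ) * v ^ (n - 1)))
    hsumU isOpen_ball
    (convex_ball (0:ℝ) R).isPreconnected
    (fun (n : ℕ) (v : ℝ) _ => (hasDerivAt_pow n v).const_mul (a n))
    hbound (mem_ball_self hR0) (ha.summable 0) hu
  have hsum : Summable fun n => a n * ((n : ℝ) * u ^ (n - 1)) := by
    refine Summable.of_norm (Summable.of_nonneg_of_le (fun n => norm_nonneg _)
      (fun n => hbound n u hu) hsumU)
  have hval : (∑' n, a n * ((n : ℝ) * u ^ (n - 1))) = psum (seqD a) u := by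
    rw [Summable.tsum_eq_zero_add hsum]
    simp only [psum, seqD, Nat.cast_zero, zero_mul, mul_zero, zero_add, Nat.add_sub_cancel]
    exact tsum_congr fun n => by push_cast; ring
  rw [← hval]
  exact hd

variable {p : ℝ}

lemma gamma_ne (hp : ∀ m : ℕ, p ≠ (m : ℝ) + 1) (n : ℕ) : Real.Gamma (-p + n + 1) ≠ 0 := by
  refine Real.Gamma_ne_zero fun m hm => ?_
  exact hp (n + m) (by push_cast; linarith)

lemma bc_rec (hp : ∀ m : ℕ, p ≠ (m : ℝ) + 1) (n : ℕ) :
    4 * ((n : ℝ) + 1) * (((n : ℝ) + 1) - p) * bc p (n + 1) = - bc p n := by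
  have hΓ : Real.Gamma (-p + (n + 1 : ℕ) + 1) = (-p + n + 1) * Real.Gamma (-p + n + 1) := by
    have hne : (-p + n + 1 : ℝ) ≠ 0 := by
      intro h; exact hp n (by linarith)
    have := Real.Gamma_add_one hne
    rw [show (-p + ((n : ℕ) + 1 : ℕ) + 1 : ℝ) = (-p + n + 1) + 1 by push_cast; ring]
    exact this
  have h1 := gamma_ne hp n
  have h2 : (n.factorial : ℝ) ≠ 0 := Nat.cast_ne_zero.2 n.factorial_ne_zero
  have h4 : (4 : ℝ) ^ n ≠ 0 := by positivity
  have hne : (-p + n + 1 : ℝ) ≠ 0 := by intro h; exact hp n (by linarith)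
  simp only [bc, hΓ, Nat.factorial_succ, pow_succ]
  push_cast
  field_simp
  ring

lemma bc_entire (hp : ∀ m : ℕ, p ≠ (m : ℝ) + 1) : Entire (bc p) := by
  intro r hr
  obtain ⟨N, hN⟩ := exists_nat_ge (max p (r / 2))
  have hNp : p ≤ (N : ℝ) := le_trans (le_max_left _ _) hN
  have hNr : r / 2 ≤ (N : ℝ) := le_trans (le_max_right _ _) hN
  refine summable_of_ratio_norm_eventually_le (r := 1 / 2) (by norm_num) ?_
  filter_upwards [eventually_ge_atTop N] with n hn
  have hnn : (N : ℝ) ≤ (n : ℝ) := Nat.cast_le.2 hn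
  have hD : (0:ℝ) < 4 * ((n : ℝ) + 1) * (((n : ℝ) + 1) - p) := by nlinarith
  have habs : |bc p (n + 1)| = |bc p n| / (4 * ((n : ℝ) + 1) * (((n : ℝ) + 1) - p)) := by
    have h := bc_rec hp n
    have : bc p (n + 1) = - bc p n / (4 * ((n : ℝ) + 1) * (((n : ℝ) + 1) - p)) := by
      rw [eq_div_iff hD.ne']
      linear_combination h
    rw [this, abs_div, abs_neg, abs_of_pos hD]
  have hA : (0:ℝ) ≤ |bc p n| * r ^ n := by positivity
  have hD2 : 2 * r ≤ 4 * ((n : ℝ) + 1) * (((n : ℝ) + 1) - p) := by nlinarith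
  have key : |bc p (n + 1)| * r ^ (n + 1) ≤ 1 / 2 * (|bc p n| * r ^ n) := by
    rw [habs, pow_succ, div_mul_eq_mul_div, div_le_iff₀ hD]
    nlinarith [mul_le_mul_of_nonneg_left hD2 hA]
  have e1 : ‖|bc p (n + 1)| * r ^ (n + 1)‖ = |bc p (n + 1)| * r ^ (n + 1) :=
    Real.norm_of_nonneg (by positivity)
  have e2 : ‖|bc p n| * r ^ n‖ = |bc p n| * r ^ n := Real.norm_of_nonneg (by positivity)
  rw [e1, e2]
  exact key

lemma key_identity (hp : ∀ m : ℕ, p ≠ (m : ℝ) + 1) (u : ℝ) :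
    4 * u * psum (seqD (seqD (bc p))) u + 4 * (1 - p) * psum (seqD (bc p)) u
      + psum (bc p) u = 0 := by
  set a := bc p with ha
  set d : ℕ → ℝ := fun n => 4 * ((n : ℝ) * seqD a n) with hd
  have hEnt : Entire a := bc_entire hp
  have hEnt1 : Entire (seqD a) := hEnt.seqD
  have hEntd : Entire d := Entire.const_mul 4 hEnt1.mul_nat
  have hsd : Summable fun n => d n * u ^ n := hEntd.summable u
  have h2 : 4 * u * psum (seqD (seqD a)) u = ∑' n, d n * u ^ n := by
    rw [Summable.tsum_eq_zero_add hsd]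
    simp only [hd, Nat.cast_zero, zero_mul, mul_zero, zero_add]
    rw [psum, ← tsum_mul_left]
    exact (tsum_congr fun n => by simp only [seqD]; push_cast; ring).symm
  have h3 : 4 * (1 - p) * psum (seqD a) u = ∑' n, (4 * (1 - p)) * (seqD a n * u ^ n) := by
    rw [psum, ← tsum_mul_left]
  have hs1 : Summable fun n => (4 * (1 - p)) * (seqD a n * u ^ n) :=
    (hEnt1.summable u).mul_left _
  have hs0 : Summable fun n => a n * u ^ n := hEnt.summable u
  rw [h2, h3, psum, ← Summable.tsum_add hsd hs1, ← Summable.tsum_add (hsd.add hs1) hs0]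
  rw [show (0:ℝ) = ∑' (_ : ℕ), (0:ℝ) by simp]
  refine tsum_congr fun n => ?_
  have hr := bc_rec hp n
  simp only [hd, seqD, ← ha]
  linear_combination (u ^ n) * hr

lemma shape_deriv (α c z : ℝ) (hz : 0 < z) (W W' : ℝ → ℝ)
    (hW : ∀ u, HasDerivAt W (W' u) u) :
    HasDerivAt (fun y => y ^ c * W (y ^ (2 * α)))
      (z ^ (c - 1) * (c * W (z ^ (2 * α)) + 2 * α * z ^ (2 * α) * W' (z ^ (2 * α)))) z := by
  have h1 := Real.hasDerivAt_rpow_const (x := z) (p := c) (Or.inl hz.ne')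
  have h2 := Real.hasDerivAt_rpow_const (x := z) (p := 2 * α) (Or.inl hz.ne')
  have h3 : HasDerivAt (fun y => W (y ^ (2 * α)))
      (W' (z ^ (2 * α)) * (2 * α * z ^ (2 * α - 1))) z := (hW (z ^ (2 * α))).comp z h2
  have h4 := h1.mul h3
  refine h4.congr_deriv ?_
  have e1 : z ^ c * z ^ (2 * α - 1) = z ^ (c - 1) * z ^ (2 * α) := by
    rw [← Real.rpow_add hz, ← Real.rpow_add hz]
    ring_nf
  linear_combination (2 * α * W' (z ^ (2 * α))) * e1

noncomputable def W0 (p : ℝ) : ℝ → ℝ := fun u => 2 ^ p * psum (bc p) u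
noncomputable def W0' (p : ℝ) : ℝ → ℝ := fun u => 2 ^ p * psum (seqD (bc p)) u
noncomputable def W0'' (p : ℝ) : ℝ → ℝ := fun u => 2 ^ p * psum (seqD (seqD (bc p))) u
noncomputable def W1 (α p : ℝ) : ℝ → ℝ :=
  fun u => (α * -p) * W0 p u + 2 * α * u * W0' p u
noncomputable def W1' (α p : ℝ) : ℝ → ℝ :=
  fun u => (α * -p) * W0' p u + (2 * α * W0' p u + 2 * α * u * W0'' p u)

lemma hasDerivAt_W0 (hp : ∀ m : ℕ, p ≠ (m : ℝ) + 1) (u : ℝ) :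
    HasDerivAt (W0 p) (W0' p u) u :=
  (hasDerivAt_psum (bc_entire hp) u).const_mul _

lemma hasDerivAt_W0' (hp : ∀ m : ℕ, p ≠ (m : ℝ) + 1) (u : ℝ) :
    HasDerivAt (W0' p) (W0'' p u) u :=
  (hasDerivAt_psum (bc_entire hp).seqD u).const_mul _

lemma hasDerivAt_W1 (α : ℝ) (hp : ∀ m : ℕ, p ≠ (m : ℝ) + 1) (u : ℝ) :
    HasDerivAt (W1 α p) (W1' α p u) u := by
  have h_lin : HasDerivAt (fun y : ℝ => 2 * α * y) (2 * α) u := by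
    simpa using (hasDerivAt_id u).const_mul (2 * α)
  have h := ((hasDerivAt_W0 hp u).const_mul (α * -p)).add
    (h_lin.mul (hasDerivAt_W0' hp u))
  exact h

lemma term_eq (α : ℝ) (z : ℝ) (hz : 0 < z) (n : ℕ) :
    ((-1 : ℝ) ^ n / ((n.factorial : ℝ) * Real.Gamma (-p + n + 1)))
      * (z ^ α / 2) ^ (2 * (n : ℝ) - p)
    = z ^ (α * -p) * ((2:ℝ) ^ p * (bc p n * (z ^ (2 * α)) ^ n)) := by
  have hb : (0:ℝ) < z ^ α / 2 := by positivity
  have hsplit : (z ^ α / 2) ^ (2 * (n : ℝ) - p)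
      = (z ^ α / 2) ^ (2 * n : ℕ) * (z ^ α / 2) ^ (-p) := by
    rw [show 2 * (n : ℝ) - p = ((2 * n : ℕ) : ℝ) + (-p) by push_cast; ring,
      Real.rpow_add hb, Real.rpow_natCast]
  have hsq : (z ^ α / 2) ^ (2 : ℕ) = z ^ (2 * α) / 4 := by
    rw [div_pow, ← Real.rpow_natCast (z ^ α) 2, ← Real.rpow_mul hz.le]
    norm_num [mul_comm]
  have hneg : (z ^ α / 2) ^ (-p) = z ^ (α * -p) * 2 ^ p := by
    rw [Real.div_rpow (Real.rpow_nonneg hz.le α) (by norm_num),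
      ← Real.rpow_mul hz.le, Real.rpow_neg (by norm_num : (0:ℝ) ≤ 2), div_eq_mul_inv, inv_inv]
  rw [hsplit, pow_mul, hsq, hneg, div_pow, bc]
  have h4 : ((4:ℝ) ^ n) ≠ 0 := by positivity
  have hΓ : ((n.factorial : ℝ) * Real.Gamma (-p + n + 1)) ≠ 0 ∨ True := Or.inr trivial
  field_simp

lemma bessel_eq (α : ℝ) (hp : ∀ m : ℕ, p ≠ (m : ℝ) + 1) :
    Set.EqOn (confBesselJneg α p)
      (fun y => y ^ (α * -p) * W0 p (y ^ (2 * α))) (Set.Ioi 0) := by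
  intro z hz
  have hz' : (0:ℝ) < z := hz
  simp only [confBesselJneg, W0, psum]
  rw [← tsum_mul_left, ← tsum_mul_left]
  exact tsum_congr fun n => term_eq α z hz' n

end ConfBesselAux

open ConfBesselAux Filter

theorem conformable_bessel_order_neg_p (α : ℝ) (hα : α ∈ Set.Ioc (0:ℝ) 1)
    (p : ℝ) (hp : ∀ m : ℕ, p ≠ (m : ℝ) + 1) (x : ℝ) (hx : 0 < x) :
    x ^ (2 * α) * confDeriv α (confDeriv α (confBesselJneg α p)) x
      + α * x ^ α * confDeriv α (confBesselJneg α p) x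
      + α ^ 2 * (x ^ (2 * α) - p ^ 2) * confBesselJneg α p x = 0 := by
  obtain ⟨hα0, -⟩ := hα
  have hEq0 := bessel_eq (p := p) α hp
  -- inner conformable derivative
  have hT1 : Set.EqOn (confDeriv α (confBesselJneg α p))
      (fun y => y ^ (α * -p - α) * W1 α p (y ^ (2 * α))) (Set.Ioi 0) := by
    intro z hz
    have hz' : (0:ℝ) < z := hz
    have hev : confBesselJneg α p =ᶠ[nhds z]
        (fun y => y ^ (α * -p) * W0 p (y ^ (2 * α))) :=
      Filter.eventuallyEq_of_mem (Ioi_mem_nhds hz') hEq0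
    have hd : HasDerivAt (confBesselJneg α p)
        (z ^ (α * -p - 1) * ((α * -p) * W0 p (z ^ (2 * α))
          + 2 * α * z ^ (2 * α) * W0' p (z ^ (2 * α)))) z :=
      (shape_deriv α (α * -p) z hz' (W0 p) (W0' p) (hasDerivAt_W0 hp)).congr_of_eventuallyEq hev
    simp only [confDeriv]
    rw [hd.deriv, W1, ← mul_assoc, ← Real.rpow_add hz',
      show (1 - α) + (α * -p - 1) = α * -p - α by ring]
  have hev2 : confDeriv α (confBesselJneg α p) =ᶠ[nhds x]
      (fun y => y ^ (α * -p - α) * W1 α p (y ^ (2 * α))) :=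
    Filter.eventuallyEq_of_mem (Ioi_mem_nhds hx) hT1
  have hd2 : HasDerivAt (confDeriv α (confBesselJneg α p))
      (x ^ (α * -p - α - 1) * ((α * -p - α) * W1 α p (x ^ (2 * α))
        + 2 * α * x ^ (2 * α) * W1' α p (x ^ (2 * α)))) x :=
    (shape_deriv α (α * -p - α) x hx (W1 α p) (W1' α p)
      (hasDerivAt_W1 α hp)).congr_of_eventuallyEq hev2
  have hd1 : HasDerivAt (confBesselJneg α p)
      (x ^ (α * -p - 1) * ((α * -p) * W0 p (x ^ (2 * α))
        + 2 * α * x ^ (2 * α) * W0' p (x ^ (2 * α)))) x :=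
    (shape_deriv α (α * -p) x hx (W0 p) (W0' p)
      (hasDerivAt_W0 hp)).congr_of_eventuallyEq
      (Filter.eventuallyEq_of_mem (Ioi_mem_nhds hx) hEq0)
  have hy0 : confBesselJneg α p x = x ^ (α * -p) * W0 p (x ^ (2 * α)) := hEq0 (Set.mem_Ioi.2 hx)
  simp only [confDeriv]
  rw [hd2.deriv, hd1.deriv, hy0]
  have eA : x ^ (2 * α) * (x ^ (1 - α) * x ^ (α * -p - α - 1)) = x ^ (α * -p) := by
    rw [← Real.rpow_add hx, ← Real.rpow_add hx]
    congr 1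
    ring
  have eB : x ^ α * (x ^ (1 - α) * x ^ (α * -p - 1)) = x ^ (α * -p) := by
    rw [← Real.rpow_add hx, ← Real.rpow_add hx]
    congr 1
    ring
  have hkey := key_identity hp (x ^ (2 * α))
  simp only [W0, W0', W0'', W1, W1']
  linear_combination
    (((α * -p - α) * ((α * -p) * (2 ^ p * psum (bc p) (x ^ (2*α)))
        + 2 * α * x ^ (2*α) * (2 ^ p * psum (seqD (bc p)) (x ^ (2*α))))
      + 2 * α * x ^ (2*α) * ((α * -p) * (2 ^ p * psum (seqD (bc p)) (x ^ (2*α)))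
        + (2 * α * (2 ^ p * psum (seqD (bc p)) (x ^ (2*α)))
          + 2 * α * x ^ (2*α) * (2 ^ p * psum (seqD (seqD (bc p))) (x ^ (2*α))))))) * eA
    + (α * ((α * -p) * (2 ^ p * psum (bc p) (x ^ (2*α)))
        + 2 * α * x ^ (2*α) * (2 ^ p * psum (seqD (bc p)) (x ^ (2*α))))) * eB
    + (x ^ (α * -p) * α ^ 2 * x ^ (2*α) * (2:ℝ) ^ p) * hkey
end
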